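/- Taylor remainder formula for the discrete average operator: if f : ℝ → ℝ is twice continuously differentiable, then A_h^n f = f + R_{A_h^n}(f), where R_{A_h^n}(f)(x) = (h²/2^{n+2}) Σ_{k=0}^{n} C(n,k)(n-2k)² ∫_0^1 (1-σ) f''(x + ((n-2k)h/2)σ) dσ. In particular, |A_h^n f(x) - f(x)| ≤ C h² sup|f''| with C depending only on n. -/

import Mathlib

open Finset intervalIntegral

/-- Iterated average `A_h^n f (x) = 2^{-n} Σ_{k=0}^n C(n,k) f(x + (n-2k)h/2)`. -/
noncomputable def AhIter (h : ℝ) (n : ℕ) (f : ℝ → ℝ) : ℝ → ℝ := fun x =>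
  (1 / 2 ^ n) * ∑ k ∈ Finset.range (n + 1),
    (n.choose k : ℝ) * f (x + ((n : ℝ) - 2 * k) * h / 2)

/-!
Expanding each `f (x + d)` by Taylor's formula with integral remainder,
`f (x + d) = f x + d f'(x) + d² ∫₀¹ (1 - σ) f''(x + dσ) dσ`, the averaged zeroth-order terms give
`f x` since the weights sum to one, and the first-order terms cancel since the nodes
`x + (n - 2k)h/2` are symmetric about `x`. Only the second-order remainders survive, and each
integral is at most `sup |f''|` in absolute value.
-/

theorem taylor_two_integral_remainder {f : ℝ → ℝ} (hf : ContDiff ℝ 2 f) (x a : ℝ) :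
    f (x + a) = f x + a * deriv f x
      + a ^ 2 * ∫ σ in (0:ℝ)..1, (1 - σ) * iteratedDeriv 2 f (x + a * σ) := by
  have hf' : Differentiable ℝ (deriv f) := by
    simpa [iteratedDeriv_one] using hf.differentiable_iteratedDeriv' 1
  have hf'' : Continuous (iteratedDeriv 2 f) := hf.continuous_iteratedDeriv' 2
  have hline : ∀ σ : ℝ, HasDerivAt (fun σ => x + a * σ) a σ := fun σ => by
    simpa using ((hasDerivAt_id σ).const_mul a).const_add x
  have hderiv : ∀ σ : ℝ, HasDerivAt
      (fun σ => f (x + a * σ) + (1 - σ) * (a * deriv f (x + a * σ)))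
      (a ^ 2 * ((1 - σ) * iteratedDeriv 2 f (x + a * σ))) σ := fun σ => by
    have h0 := ((hf.differentiable two_ne_zero _).hasDerivAt).comp σ (hline σ)
    have h1 := (((hf' _).hasDerivAt).comp σ (hline σ)).const_mul a
    have h2 := ((hasDerivAt_id σ).const_sub 1).mul h1
    refine (h0.add h2).congr_deriv ?_
    rw [iteratedDeriv_succ, iteratedDeriv_one]
    simp only [Function.comp_apply, id]
    ring
  have hint := integral_eq_sub_of_hasDerivAt (a := 0) (b := 1) (fun σ _ => hderiv σ)
    ((continuous_const.mul ((continuous_const.sub continuous_id).mul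
      (hf''.comp (by fun_prop)))).intervalIntegrable _ _)
  rw [integral_const_mul] at hint
  simp only [mul_one, mul_zero, add_zero, sub_self, zero_mul, sub_zero, one_mul] at hint
  linarith

theorem sum_mul_apply_add_eq_add_sum {ι : Type*} (s : Finset ι) (w d : ι → ℝ)
    (hw : ∑ i ∈ s, w i = 1) (hd : ∑ i ∈ s, w i * d i = 0) {f : ℝ → ℝ} (hf : ContDiff ℝ 2 f)
    (x : ℝ) :
    ∑ i ∈ s, w i * f (x + d i)
      = f x + ∑ i ∈ s, w i * d i ^ 2
          * ∫ σ in (0:ℝ)..1, (1 - σ) * iteratedDeriv 2 f (x + d i * σ) := by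
  simp_rw [taylor_two_integral_remainder hf x, mul_add, sum_add_distrib, ← sum_mul, hw,
    ← mul_assoc, ← sum_mul, hd]
  ring

theorem sum_choose_mul_sub_two_mul (n : ℕ) :
    ∑ k ∈ range (n + 1), (n.choose k : ℝ) * ((n : ℝ) - 2 * k) = 0 := by
  have hreflect := sum_range_reflect (fun k => (n.choose k : ℝ) * ((n : ℝ) - 2 * k)) (n + 1)
  have hantisymm : ∑ k ∈ range (n + 1),
        (n.choose (n + 1 - 1 - k) : ℝ) * ((n : ℝ) - 2 * ↑(n + 1 - 1 - k))
      = -∑ k ∈ range (n + 1), (n.choose k : ℝ) * ((n : ℝ) - 2 * k) := by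
    rw [← sum_neg_distrib]
    refine sum_congr rfl fun k hk => ?_
    have hkn : k ≤ n := Nat.lt_succ_iff.mp (mem_range.mp hk)
    rw [Nat.add_sub_cancel, Nat.choose_symm hkn, Nat.cast_sub hkn]
    ring
  linarith

theorem abs_integral_one_sub_mul_le {g : ℝ → ℝ} {M : ℝ} (hg : ∀ y, |g y| ≤ M) :
    |∫ σ in (0:ℝ)..1, (1 - σ) * g σ| ≤ M := by
  have := norm_integral_le_of_norm_le_const (a := 0) (b := 1) (C := M)
    (f := fun σ => (1 - σ) * g σ) fun σ hσ => ?_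
  · simpa using this
  rw [Set.uIoc_of_le zero_le_one] at hσ
  have h1 : |1 - σ| ≤ 1 := abs_le.mpr ⟨by linarith [hσ.2], by linarith [hσ.1]⟩
  calc ‖(1 - σ) * g σ‖ = |1 - σ| * |g σ| := abs_mul _ _
    _ ≤ 1 * M := mul_le_mul h1 (hg σ) (abs_nonneg _) zero_le_one
    _ = M := one_mul M

theorem AhIter_eq_add_sum (h : ℝ) (n : ℕ) {f : ℝ → ℝ} (hf : ContDiff ℝ 2 f) (x : ℝ) :
    AhIter h n f x
      = f x + h ^ 2 / 2 ^ (n + 2) * ∑ k ∈ range (n + 1),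
          (n.choose k : ℝ) * ((n : ℝ) - 2 * k) ^ 2
          * ∫ σ in (0:ℝ)..1, (1 - σ) * iteratedDeriv 2 f (x + ((n : ℝ) - 2 * k) * h / 2 * σ) := by
  have hw : ∑ k ∈ range (n + 1), (n.choose k : ℝ) / 2 ^ n = 1 := by
    rw [← sum_div, ← Nat.cast_sum, Nat.sum_range_choose]
    push_cast
    exact div_self (by positivity)
  have hd :
      ∑ k ∈ range (n + 1), (n.choose k : ℝ) / 2 ^ n * (((n : ℝ) - 2 * k) * h / 2) = 0 := by
    calc _ = h / 2 ^ (n + 1) * ∑ k ∈ range (n + 1), (n.choose k : ℝ) * ((n : ℝ) - 2 * k) := by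
          rw [mul_sum]
          exact sum_congr rfl fun k _ => by ring
      _ = 0 := by rw [sum_choose_mul_sub_two_mul, mul_zero]
  calc AhIter h n f x
      = ∑ k ∈ range (n + 1), (n.choose k : ℝ) / 2 ^ n * f (x + ((n : ℝ) - 2 * k) * h / 2) := by
        rw [AhIter, mul_sum]
        exact sum_congr rfl fun k _ => by ring
    _ = _ := sum_mul_apply_add_eq_add_sum _ _ _ hw hd hf x
    _ = _ := by
        rw [mul_sum]
        exact congrArg _ (sum_congr rfl fun k _ => by ring)

theorem abs_AhIter_sub_le (h : ℝ) (n : ℕ) {f : ℝ → ℝ} (hf : ContDiff ℝ 2 f) {M : ℝ}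
    (hM : ∀ y, |iteratedDeriv 2 f y| ≤ M) (x : ℝ) :
    |AhIter h n f x - f x|
      ≤ h ^ 2 / 2 ^ (n + 2)
          * (∑ k ∈ range (n + 1), (n.choose k : ℝ) * ((n : ℝ) - 2 * k) ^ 2) * M := by
  rw [AhIter_eq_add_sum h n hf, add_sub_cancel_left, abs_mul, abs_of_nonneg (by positivity),
    mul_assoc, sum_mul]
  gcongr
  refine (abs_sum_le_sum_abs _ _).trans (sum_le_sum fun k _ => ?_)
  rw [abs_mul, abs_of_nonneg (by positivity)]
  gcongr
  exact abs_integral_one_sub_mul_le fun σ => hM _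

/-- Taylor remainder formula for the iterated average: if `f` is `C²` then
`A_h^n f = f + R_{A_h^n}(f)` with the explicit integral remainder, and in particular
`|A_h^n f(x) - f(x)| ≤ C h² sup |f''|` with `C` depending only on `n`. -/
theorem AhIter_taylor (n : ℕ) :
    ∃ C > 0, ∀ (h : ℝ), 0 < h → ∀ (f : ℝ → ℝ), ContDiff ℝ 2 f → ∀ x : ℝ,
      (AhIter h n f x
          = f x
            + h ^ 2 / 2 ^ (n + 2) * ∑ k ∈ Finset.range (n + 1),
                (n.choose k : ℝ) * ((n : ℝ) - 2 * k) ^ 2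
                  * ∫ σ in (0:ℝ)..1,
                      (1 - σ) * iteratedDeriv 2 f (x + ((n : ℝ) - 2 * k) * h / 2 * σ)) ∧
        ∀ M : ℝ, (∀ y : ℝ, |iteratedDeriv 2 f y| ≤ M) →
          |AhIter h n f x - f x| ≤ C * h ^ 2 * M := by
  set B := ∑ k ∈ range (n + 1), (n.choose k : ℝ) * ((n : ℝ) - 2 * k) ^ 2
  -- the `+ 1` keeps `C` positive when `n = 0`, where `B = 0`
  refine ⟨B / 2 ^ (n + 2) + 1, by positivity, fun h _ f hf x => ⟨AhIter_eq_add_sum h n hf x, ?_⟩⟩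
  intro M hM
  have hM0 : 0 ≤ M := (abs_nonneg _).trans (hM 0)
  calc |AhIter h n f x - f x| ≤ h ^ 2 / 2 ^ (n + 2) * B * M := abs_AhIter_sub_le h n hf hM x
    _ ≤ (B / 2 ^ (n + 2) + 1) * h ^ 2 * M := by
        rw [div_mul_eq_mul_div, mul_comm (h ^ 2), ← div_mul_eq_mul_div]
        gcongr
        linarith
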